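/- For every natural number n ≥ 1, sf(n) is even if and only if n is divisible by 3. -/
import Mathlib


def sf : ℕ → ℕ
  | 0 => 1
  | 1 => 1
  | n + 2 => if (n + 2) % 2 = 0 then sf ((n + 2) / 2) else sf (n + 1) + sf n
decreasing_by all_goals omega

lemma sf_two_mul (m : ℕ) : sf (2 * m + 2) = sf (m + 1) := by
  rw [sf]
  have h : (2 * m + 2) % 2 = 0 := by omega
  simp [h]

lemma sf_odd (m : ℕ) : sf (2 * m + 3) = sf (2 * m + 2) + sf (2 * m + 1) := by
  have h : ¬ (2 * m + 1 + 2) % 2 = 0 := by omega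
  rw [show 2 * m + 3 = (2 * m + 1) + 2 from by ring, sf, if_neg h]

theorem sf_even_iff (n : ℕ) (hn : 1 ≤ n) : Even (sf n) ↔ 3 ∣ n := by
  induction n using Nat.strong_induction_on with
  | _ n ih =>
    match n, hn with
    | 1, _ => simp [sf]
    | 2, _ =>
      have := sf_two_mul 0
      norm_num at this ⊢
      simp [this, sf]
    | (m + 3), _ =>
      rcases Nat.even_or_odd (m + 3) with ⟨k, hk⟩ | ⟨k, hk⟩
      · -- m + 3 = 2k, k ≥ 2
        have hk2 : m + 3 = 2 * (k - 1) + 2 := by omega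
        rw [hk2, sf_two_mul]
        have h1 : Even (sf (k - 1 + 1)) ↔ 3 ∣ (k - 1 + 1) := by
          apply ih <;> omega
        rw [h1]
        omega
      · -- m + 3 = 2k + 1, k ≥ 1
        have hk2 : m + 3 = 2 * (k - 1) + 3 := by omega
        rw [hk2, sf_odd, Nat.even_add]
        have h1 : Even (sf (2 * (k - 1) + 2)) ↔ 3 ∣ (2 * (k - 1) + 2) := by
          apply ih <;> omega
        have h2 : Even (sf (2 * (k - 1) + 1)) ↔ 3 ∣ (2 * (k - 1) + 1) := by
          apply ih <;> omega
        rw [h1, h2]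
        have h3 : (k - 1) % 3 = 0 ∨ (k - 1) % 3 = 1 ∨ (k - 1) % 3 = 2 := by omega
        rcases h3 with h3 | h3 | h3
        · have a1 : ¬ (3 ∣ 2 * (k - 1) + 2) := by omega
          have a2 : ¬ (3 ∣ 2 * (k - 1) + 1) := by omega
          have a3 : 3 ∣ 2 * (k - 1) + 3 := by omega
          simp [a1, a2, a3]
        · have a1 : ¬ (3 ∣ 2 * (k - 1) + 2) := by omega
          have a2 : 3 ∣ 2 * (k - 1) + 1 := by omega
          have a3 : ¬ (3 ∣ 2 * (k - 1) + 3) := by omega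
          simp [a1, a2, a3]
        · have a1 : 3 ∣ 2 * (k - 1) + 2 := by omega
          have a2 : ¬ (3 ∣ 2 * (k - 1) + 1) := by omega
          have a3 : ¬ (3 ∣ 2 * (k - 1) + 3) := by omega
          simp [a1, a2, a3]
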